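/- arXiv:2406.18562 — 2 statements merged into one kernel-verified Lean document; each statement's English description precedes it below -/
import Mathlib

section
/- Consider 4 points in ℝ² given by z_{(y,a)} = ((−1)^a · m_sp, (−1)^y · m_inv) with labels y ∈ {0,1}, where 0 < m_sp < m_inv. The maximum-margin linear classifier separating the points by label y has margin m_inv, achieved by the classifier depending only on the second coordinate. Conversely, if the labels are given by a ∈ {0,1} instead, the maximum margin is m_sp. -/
/-!
A classifier with unit normal `w` and margin `m` on two oppositely labelled points `u`, `v`
satisfies `2 m ≤ w ⬝ᵥ (u - v) ≤ ‖u - v‖` by Cauchy–Schwarz. The points `z_{(0,0)}`, `z_{(1,0)}`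
are `2 m_inv` apart and `z_{(0,0)}`, `z_{(0,1)}` are `2 m_sp` apart, and the two coordinate
classifiers attain these bounds.
-/

open Matrix

/-- The four toy representation points z_{(y,a)} = ((−1)^a·m_sp, (−1)^y·m_inv) ∈ ℝ². -/
noncomputable def zpt (msp minv : ℝ) (p : Fin 2 × Fin 2) : Fin 2 → ℝ :=
  ![(-1 : ℝ) ^ (p.2 : ℕ) * msp, (-1 : ℝ) ^ (p.1 : ℕ) * minv]

/-- The margins `m` attained on the points `z i`, labelled by the parity of `label i`, by some
affine classifier `x ↦ w ⬝ᵥ x + b` with unit normal `w`. -/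
def marginSet {ι : Type*} (z : ι → Fin 2 → ℝ) (label : ι → ℕ) : Set ℝ :=
  {m | ∃ (w : Fin 2 → ℝ) (b : ℝ), w 0 ^ 2 + w 1 ^ 2 = 1 ∧
    ∀ i, m ≤ (-1 : ℝ) ^ label i * (w ⬝ᵥ z i + b)}

theorem dotProduct_le_sqrt_of_unit {w : Fin 2 → ℝ} (hw : w 0 ^ 2 + w 1 ^ 2 = 1)
    (d : Fin 2 → ℝ) : w ⬝ᵥ d ≤ √(d 0 ^ 2 + d 1 ^ 2) := by
  have cauchy_schwarz : (w ⬝ᵥ d) ^ 2 ≤ d 0 ^ 2 + d 1 ^ 2 := by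
    have lagrange : (w ⬝ᵥ d) ^ 2 + (w 0 * d 1 - w 1 * d 0) ^ 2
        = (w 0 ^ 2 + w 1 ^ 2) * (d 0 ^ 2 + d 1 ^ 2) := by
      simp only [dotProduct, Fin.sum_univ_two]; ring
    rw [hw, one_mul] at lagrange
    linarith [sq_nonneg (w 0 * d 1 - w 1 * d 0)]
  exact (le_abs_self _).trans (Real.abs_le_sqrt cauchy_schwarz)

theorem two_mul_le_sqrt_of_mem_marginSet {ι : Type*} {z : ι → Fin 2 → ℝ} {label : ι → ℕ}
    {m : ℝ} (hm : m ∈ marginSet z label) {i j : ι} (hi : Even (label i)) (hj : Odd (label j)) :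
    2 * m ≤ √((z i 0 - z j 0) ^ 2 + (z i 1 - z j 1) ^ 2) := by
  obtain ⟨w, b, hw, hmargin⟩ := hm
  have hmi := hmargin i
  have hmj := hmargin j
  rw [hi.neg_one_pow, one_mul] at hmi
  rw [hj.neg_one_pow, neg_one_mul] at hmj
  calc 2 * m ≤ w ⬝ᵥ (z i - z j) := by rw [dotProduct_sub]; linarith
    _ ≤ _ := dotProduct_le_sqrt_of_unit hw _

theorem isGreatest_marginSet {ι : Type*} {z : ι → Fin 2 → ℝ} {label : ι → ℕ} {m : ℝ}
    (hm : m ∈ marginSet z label) {i j : ι} (hi : Even (label i)) (hj : Odd (label j))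
    (hdist : √((z i 0 - z j 0) ^ 2 + (z i 1 - z j 1) ^ 2) ≤ 2 * m) :
    IsGreatest (marginSet z label) m :=
  ⟨hm, fun _ hm' => by linarith [two_mul_le_sqrt_of_mem_marginSet hm' hi hj]⟩

theorem zpt_margin_fst (msp minv : ℝ) (p : Fin 2 × Fin 2) :
    minv ≤ (-1 : ℝ) ^ (p.1 : ℕ) * ((![0, 1] : Fin 2 → ℝ) ⬝ᵥ zpt msp minv p + 0) := by
  simp [zpt, dotProduct, Fin.sum_univ_two, ← mul_assoc, ← mul_pow]

theorem zpt_margin_snd (msp minv : ℝ) (p : Fin 2 × Fin 2) :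
    msp ≤ (-1 : ℝ) ^ (p.2 : ℕ) * ((![1, 0] : Fin 2 → ℝ) ⬝ᵥ zpt msp minv p + 0) := by
  simp [zpt, dotProduct, Fin.sum_univ_two, ← mul_assoc, ← mul_pow]

/-- With 0 < m_sp < m_inv, the maximum margin of a unit-normal linear classifier separating the
points by label y is m_inv, achieved by the classifier depending only on the second coordinate;
if instead the labels are a, the maximum margin is m_sp. -/
theorem stmt10 (msp minv : ℝ) (h0 : 0 < msp) (h1 : msp < minv) :
    IsGreatest {m : ℝ | ∃ (w : Fin 2 → ℝ) (b : ℝ), w 0 ^ 2 + w 1 ^ 2 = 1 ∧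
        ∀ p : Fin 2 × Fin 2, m ≤ (-1 : ℝ) ^ (p.1 : ℕ) * (w ⬝ᵥ zpt msp minv p + b)} minv ∧
    (∀ p : Fin 2 × Fin 2,
      minv ≤ (-1 : ℝ) ^ (p.1 : ℕ) * ((![0, 1] : Fin 2 → ℝ) ⬝ᵥ zpt msp minv p + 0)) ∧
    IsGreatest {m : ℝ | ∃ (w : Fin 2 → ℝ) (b : ℝ), w 0 ^ 2 + w 1 ^ 2 = 1 ∧
        ∀ p : Fin 2 × Fin 2, m ≤ (-1 : ℝ) ^ (p.2 : ℕ) * (w ⬝ᵥ zpt msp minv p + b)} msp := by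
  have hinv : minv ∈ marginSet (zpt msp minv) (fun p => p.1) :=
    ⟨![0, 1], 0, by simp, zpt_margin_fst msp minv⟩
  have hsp : msp ∈ marginSet (zpt msp minv) (fun p => p.2) :=
    ⟨![1, 0], 0, by simp, zpt_margin_snd msp minv⟩
  refine ⟨isGreatest_marginSet hinv (i := (0, 0)) (j := (1, 0)) .zero odd_one ?_,
    zpt_margin_fst msp minv,
    isGreatest_marginSet hsp (i := (0, 0)) (j := (0, 1)) .zero odd_one ?_⟩
  · simp only [zpt]; norm_num [Real.sqrt_sq_eq_abs, abs_le]; constructor <;> linarith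
  · simp only [zpt]; norm_num [Real.sqrt_sq_eq_abs, abs_le]; constructor <;> linarith
end

section
/- For k₁, k₂, k₃ ≥ 1 and scalars c₁, c₂, c₃, c₄, the matrix M = c₁·I₂⊗J₂⊗J_n + c₂·J₂⊗I₂⊗J_n + c₃·I₄⊗J_n + c₄·J₄⊗J_n (of size 4n) has spectrum contained in {0, n(c₃), n(c₃ + 2c₁), n(c₃ + 2c₂), n(c₃ + 2c₁ + 2c₂ + 4c₄)}, with 0 having multiplicity at least 4(n−1). -/
/-!
If `s (a, b) = ∑ i, v (a, b, i)` are the block sums of `v`, then every entry of `M v` in block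
`(a, b)` equals `(K s) (a, b)`, where `K = c₁ I ⊗ J + c₂ J ⊗ I + c₃ I ⊗ I + c₄ J ⊗ J` is `4 × 4`.
So the vectors with vanishing block sums, a subspace of codimension at most `4`, lie in the kernel,
and an eigenvector `v` either has `s = 0`, forcing `μ v = M v = 0`, or yields the eigenvector `s`
of `n K`. The eigenvectors of `K` are the four `±1` characters of `(ℤ/2)²`, with eigenvalues
`c₃`, `c₃ + 2c₁`, `c₃ + 2c₂` and `c₃ + 2c₁ + 2c₂ + 4c₄`.
-/

open Matrix Kronecker

def J (k : ℕ) : Matrix (Fin k) (Fin k) ℝ := Matrix.of fun _ _ => 1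

section BlockSum

variable {R l m ι : Type*} [CommSemiring R] [Fintype ι]

def blockSum : (l × m × ι → R) →ₗ[R] (l × m → R) where
  toFun v q := ∑ i, v (q.1, q.2, i)
  map_add' v w := by ext; simp [Finset.sum_add_distrib]
  map_smul' c v := by ext; simp [Finset.mul_sum]

theorem blockSum_apply (v : l × m × ι → R) (q : l × m) : blockSum v q = ∑ i, v (q.1, q.2, i) :=
  rfl

theorem kronecker_kronecker_allOnes_mulVec_apply [Fintype l] [Fintype m] (A : Matrix l l R)
    (B : Matrix m m R) (v : l × m × ι → R) (p : l × m × ι) :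
    ((A ⊗ₖ (B ⊗ₖ of fun _ _ : ι => (1 : R))) *ᵥ v) p = ((A ⊗ₖ B) *ᵥ blockSum v) (p.1, p.2.1) := by
  simp only [mulVec, dotProduct, Fintype.sum_prod_type, kroneckerMap_apply, of_apply, mul_one,
    blockSum_apply, Finset.mul_sum, mul_assoc]

theorem finrank_ker_blockSum_ge {K : Type*} [Field K] [Fintype l] [Fintype m] :
    Fintype.card l * Fintype.card m * (Fintype.card ι - 1) ≤
      Module.finrank K (LinearMap.ker (blockSum : (l × m × ι → K) →ₗ[K] (l × m → K))) := by
  have hrank := LinearMap.finrank_range_add_finrank_ker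
    (blockSum : (l × m × ι → K) →ₗ[K] (l × m → K))
  have hrange := Submodule.finrank_le (LinearMap.range
    (blockSum : (l × m × ι → K) →ₗ[K] (l × m → K)))
  simp only [Module.finrank_fintype_fun_eq_card, Fintype.card_prod] at hrank hrange
  rw [Nat.mul_sub_one, mul_assoc]
  omega

end BlockSum

section QuotMatrix

variable (c₁ c₂ c₃ c₄ : ℝ)

def quotMatrix : Matrix (Fin 2 × Fin 2) (Fin 2 × Fin 2) ℝ :=
  c₁ • ((1 : Matrix (Fin 2) (Fin 2) ℝ) ⊗ₖ J 2) + c₂ • (J 2 ⊗ₖ (1 : Matrix (Fin 2) (Fin 2) ℝ)) +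
    c₃ • ((1 : Matrix (Fin 2) (Fin 2) ℝ) ⊗ₖ (1 : Matrix (Fin 2) (Fin 2) ℝ)) + c₄ • (J 2 ⊗ₖ J 2)

theorem mem_of_smul_quotMatrix_mulVec_eq {t μ : ℝ} {s : Fin 2 × Fin 2 → ℝ} (hs : s ≠ 0)
    (h : t • (quotMatrix c₁ c₂ c₃ c₄ *ᵥ s) = μ • s) :
    μ ∈ ({t * c₃, t * (c₃ + 2 * c₁), t * (c₃ + 2 * c₂),
      t * (c₃ + 2 * c₁ + 2 * c₂ + 4 * c₄)} : Set ℝ) := by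
  have entry := fun a b => congrFun h (a, b)
  simp only [quotMatrix, _root_.J, mulVec, dotProduct, Fintype.sum_prod_type, Fin.sum_univ_two,
    Pi.smul_apply, Matrix.add_apply, Matrix.smul_apply, kroneckerMap_apply, of_apply, one_apply,
    smul_eq_mul] at entry
  have e₀₀ := entry 0 0
  have e₀₁ := entry 0 1
  have e₁₀ := entry 1 0
  have e₁₁ := entry 1 1
  simp only [Fin.isValue, ↓reduceIte, one_ne_zero, zero_ne_one, mul_one, mul_zero]
    at e₀₀ e₀₁ e₁₀ e₁₁
  have h₃ : (μ - t * c₃) * (s (0, 0) - s (0, 1) - s (1, 0) + s (1, 1)) = 0 := by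
    linear_combination e₁₀ + e₀₁ - e₁₁ - e₀₀
  have h₁₃ : (μ - t * (c₃ + 2 * c₁)) * (s (0, 0) + s (0, 1) - s (1, 0) - s (1, 1)) = 0 := by
    linear_combination e₁₁ + e₁₀ - e₀₁ - e₀₀
  have h₂₃ : (μ - t * (c₃ + 2 * c₂)) * (s (0, 0) - s (0, 1) + s (1, 0) - s (1, 1)) = 0 := by
    linear_combination e₁₁ - e₁₀ + e₀₁ - e₀₀
  have h₁₂₃₄ : (μ - t * (c₃ + 2 * c₁ + 2 * c₂ + 4 * c₄)) *
      (s (0, 0) + s (0, 1) + s (1, 0) + s (1, 1)) = 0 := by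
    linear_combination -e₁₁ - e₁₀ - e₀₁ - e₀₀
  by_contra hμ
  simp only [Set.mem_insert_iff, Set.mem_singleton_iff, not_or] at hμ
  obtain ⟨hμ₃, hμ₁₃, hμ₂₃, hμ₁₂₃₄⟩ := hμ
  replace h₃ := (mul_eq_zero.1 h₃).resolve_left (sub_ne_zero.2 hμ₃)
  replace h₁₃ := (mul_eq_zero.1 h₁₃).resolve_left (sub_ne_zero.2 hμ₁₃)
  replace h₂₃ := (mul_eq_zero.1 h₂₃).resolve_left (sub_ne_zero.2 hμ₂₃)
  replace h₁₂₃₄ := (mul_eq_zero.1 h₁₂₃₄).resolve_left (sub_ne_zero.2 hμ₁₂₃₄)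
  refine hs (funext fun q => ?_)
  fin_cases q <;> simp <;> linarith

end QuotMatrix

section FullMatrix

variable (c₁ c₂ c₃ c₄ : ℝ) (n : ℕ)

def fullMatrix : Matrix (Fin 2 × Fin 2 × Fin n) (Fin 2 × Fin 2 × Fin n) ℝ :=
  c₁ • ((1 : Matrix (Fin 2) (Fin 2) ℝ) ⊗ₖ (J 2 ⊗ₖ J n)) +
    c₂ • (J 2 ⊗ₖ ((1 : Matrix (Fin 2) (Fin 2) ℝ) ⊗ₖ J n)) +
    c₃ • ((1 : Matrix (Fin 2) (Fin 2) ℝ) ⊗ₖ ((1 : Matrix (Fin 2) (Fin 2) ℝ) ⊗ₖ J n)) +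
    c₄ • (J 2 ⊗ₖ (J 2 ⊗ₖ J n))

theorem fullMatrix_mulVec_apply (v : Fin 2 × Fin 2 × Fin n → ℝ) (p : Fin 2 × Fin 2 × Fin n) :
    (fullMatrix c₁ c₂ c₃ c₄ n *ᵥ v) p = (quotMatrix c₁ c₂ c₃ c₄ *ᵥ blockSum v) (p.1, p.2.1) := by
  simp only [fullMatrix, quotMatrix, _root_.J, add_mulVec, smul_mulVec, Pi.add_apply,
    Pi.smul_apply, kronecker_kronecker_allOnes_mulVec_apply]

theorem blockSum_fullMatrix_mulVec (v : Fin 2 × Fin 2 × Fin n → ℝ) :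
    blockSum (fullMatrix c₁ c₂ c₃ c₄ n *ᵥ v) = (n : ℝ) • (quotMatrix c₁ c₂ c₃ c₄ *ᵥ blockSum v) := by
  ext q
  simp [blockSum_apply (fullMatrix c₁ c₂ c₃ c₄ n *ᵥ v), fullMatrix_mulVec_apply]

theorem ker_blockSum_le_ker_fullMatrix :
    LinearMap.ker (blockSum : (Fin 2 × Fin 2 × Fin n → ℝ) →ₗ[ℝ] _) ≤
      LinearMap.ker (fullMatrix c₁ c₂ c₃ c₄ n).mulVecLin := by
  intro v hv
  rw [LinearMap.mem_ker] at hv ⊢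
  ext p
  simp [fullMatrix_mulVec_apply, hv]

theorem mem_of_fullMatrix_mulVec_eq {μ : ℝ} {v : Fin 2 × Fin 2 × Fin n → ℝ} (hv : v ≠ 0)
    (h : fullMatrix c₁ c₂ c₃ c₄ n *ᵥ v = μ • v) :
    μ ∈ ({0, (n : ℝ) * c₃, (n : ℝ) * (c₃ + 2 * c₁), (n : ℝ) * (c₃ + 2 * c₂),
      (n : ℝ) * (c₃ + 2 * c₁ + 2 * c₂ + 4 * c₄)} : Set ℝ) := by
  by_cases hs : blockSum v = 0
  · have hμv : μ • v = 0 := by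
      rw [← h, ← mulVecLin_apply, ← LinearMap.mem_ker]
      exact ker_blockSum_le_ker_fullMatrix c₁ c₂ c₃ c₄ n hs
    exact Or.inl ((smul_eq_zero.1 hμv).resolve_right hv)
  · refine Set.mem_insert_of_mem _ (mem_of_smul_quotMatrix_mulVec_eq c₁ c₂ c₃ c₄ hs ?_)
    rw [← blockSum_fullMatrix_mulVec, h, map_smul]

end FullMatrix

theorem stmt15_general (c₁ c₂ c₃ c₄ : ℝ) (n : ℕ) :
    (∀ (μ : ℝ) (v : Fin 2 × Fin 2 × Fin n → ℝ), v ≠ 0 →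
      ((c₁ • ((1 : Matrix (Fin 2) (Fin 2) ℝ) ⊗ₖ (J 2 ⊗ₖ J n)) +
        c₂ • (J 2 ⊗ₖ ((1 : Matrix (Fin 2) (Fin 2) ℝ) ⊗ₖ J n)) +
        c₃ • ((1 : Matrix (Fin 2) (Fin 2) ℝ) ⊗ₖ ((1 : Matrix (Fin 2) (Fin 2) ℝ) ⊗ₖ J n)) +
        c₄ • (J 2 ⊗ₖ (J 2 ⊗ₖ J n))).mulVec v = μ • v) →
      μ ∈ ({0, (n : ℝ) * c₃, (n : ℝ) * (c₃ + 2 * c₁), (n : ℝ) * (c₃ + 2 * c₂),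
            (n : ℝ) * (c₃ + 2 * c₁ + 2 * c₂ + 4 * c₄)} : Set ℝ)) ∧
    4 * (n - 1) ≤ Module.finrank ℝ
      (LinearMap.ker (c₁ • ((1 : Matrix (Fin 2) (Fin 2) ℝ) ⊗ₖ (J 2 ⊗ₖ J n)) +
        c₂ • (J 2 ⊗ₖ ((1 : Matrix (Fin 2) (Fin 2) ℝ) ⊗ₖ J n)) +
        c₃ • ((1 : Matrix (Fin 2) (Fin 2) ℝ) ⊗ₖ ((1 : Matrix (Fin 2) (Fin 2) ℝ) ⊗ₖ J n)) +
        c₄ • (J 2 ⊗ₖ (J 2 ⊗ₖ J n))).mulVecLin) := by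
  refine ⟨fun μ v hv h => mem_of_fullMatrix_mulVec_eq c₁ c₂ c₃ c₄ n hv h, ?_⟩
  calc 4 * (n - 1)
      = Fintype.card (Fin 2) * Fintype.card (Fin 2) * (Fintype.card (Fin n) - 1) := by simp
    _ ≤ Module.finrank ℝ (LinearMap.ker (blockSum : (Fin 2 × Fin 2 × Fin n → ℝ) →ₗ[ℝ] _)) :=
        finrank_ker_blockSum_ge
    _ ≤ Module.finrank ℝ (LinearMap.ker (fullMatrix c₁ c₂ c₃ c₄ n).mulVecLin) :=
        Submodule.finrank_mono (ker_blockSum_le_ker_fullMatrix c₁ c₂ c₃ c₄ n)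

/-- For M = c₁·I₂⊗J₂⊗J_n + c₂·J₂⊗I₂⊗J_n + c₃·I₄⊗J_n + c₄·J₄⊗J_n (of size 4n), every
eigenvalue of M lies in {0, n·c₃, n·(c₃+2c₁), n·(c₃+2c₂), n·(c₃+2c₁+2c₂+4c₄)}, and 0 has
multiplicity at least 4(n−1). -/
theorem stmt15 (c₁ c₂ c₃ c₄ : ℝ) (n : ℕ) (hn : 1 ≤ n) :
    (∀ (μ : ℝ) (v : Fin 2 × Fin 2 × Fin n → ℝ), v ≠ 0 →
      ((c₁ • ((1 : Matrix (Fin 2) (Fin 2) ℝ) ⊗ₖ (J 2 ⊗ₖ J n)) +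
        c₂ • (J 2 ⊗ₖ ((1 : Matrix (Fin 2) (Fin 2) ℝ) ⊗ₖ J n)) +
        c₃ • ((1 : Matrix (Fin 2) (Fin 2) ℝ) ⊗ₖ ((1 : Matrix (Fin 2) (Fin 2) ℝ) ⊗ₖ J n)) +
        c₄ • (J 2 ⊗ₖ (J 2 ⊗ₖ J n))).mulVec v = μ • v) →
      μ ∈ ({0, (n : ℝ) * c₃, (n : ℝ) * (c₃ + 2 * c₁), (n : ℝ) * (c₃ + 2 * c₂),
            (n : ℝ) * (c₃ + 2 * c₁ + 2 * c₂ + 4 * c₄)} : Set ℝ)) ∧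
    4 * (n - 1) ≤ Module.finrank ℝ
      (LinearMap.ker (c₁ • ((1 : Matrix (Fin 2) (Fin 2) ℝ) ⊗ₖ (J 2 ⊗ₖ J n)) +
        c₂ • (J 2 ⊗ₖ ((1 : Matrix (Fin 2) (Fin 2) ℝ) ⊗ₖ J n)) +
        c₃ • ((1 : Matrix (Fin 2) (Fin 2) ℝ) ⊗ₖ ((1 : Matrix (Fin 2) (Fin 2) ℝ) ⊗ₖ J n)) +
        c₄ • (J 2 ⊗ₖ (J 2 ⊗ₖ J n))).mulVecLin) :=
  stmt15_general c₁ c₂ c₃ c₄ n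
end
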